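/- arXiv:1509.03332 — 6 statements merged into one kernel-verified Lean document; each statement's English description precedes it below -/
import Mathlib

section
/- Let k, l, m be positive integers and let f assign a real number f(i,j) to each pair 1 ≤ i < j ≤ m. If f is (k+2, l+2)-free, i.e. there is no (k+2)-cup and no (l+2)-cap with respect to f, then m ≤ C(k+l, k), where C(a,b) is the binomial coefficient. -/
/-!
Caps for `f` are exactly cups for `-f`, so only cups need to be handled.
Let `A ⊆ S` be the set of points that end a `(k+1)`-cup of `S`. Then `S \ A` has no
`(k+1)`-cup, and `A` has no `(l+1)`-cap: if a cap of `A` starts at the last point `c₀` of a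
cup, the first edge of the cap either extends the cup to a `(k+2)`-cup or is preceded by the
last edge of the cup to give an `(l+2)`-cap. Pascal's rule for `C(k+l, k)` finishes the
induction on `k + l`.
-/

/-- A `t`-cup with respect to `f` on indices `{1, …, m}`: a strictly increasing
sequence `q 0 < q 1 < ⋯ < q (t-1)` of indices, with non-decreasing values of `f`
on consecutive pairs. -/
def IsCup (m : ℕ) (f : ℕ → ℕ → ℝ) (t : ℕ) (q : ℕ → ℕ) : Prop :=
  (∀ i, i < t → 1 ≤ q i ∧ q i ≤ m) ∧
  (∀ i, i + 1 < t → q i < q (i + 1)) ∧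
  (∀ i, i + 2 < t → f (q i) (q (i + 1)) ≤ f (q (i + 1)) (q (i + 2)))

/-- A `t`-cap with respect to `f` on indices `{1, …, m}`: a strictly increasing
sequence of indices with non-increasing values of `f` on consecutive pairs. -/
def IsCap (m : ℕ) (f : ℕ → ℕ → ℝ) (t : ℕ) (q : ℕ → ℕ) : Prop :=
  (∀ i, i < t → 1 ≤ q i ∧ q i ≤ m) ∧
  (∀ i, i + 1 < t → q i < q (i + 1)) ∧
  (∀ i, i + 2 < t → f (q (i + 1)) (q (i + 2)) ≤ f (q i) (q (i + 1)))

/-- `f` is `(k, l)`-free: there is no `k`-cup and no `l`-cap with respect to `f`. -/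
def IsFree (m : ℕ) (f : ℕ → ℕ → ℝ) (k l : ℕ) : Prop :=
  (¬ ∃ q, IsCup m f k q) ∧ (¬ ∃ q, IsCap m f l q)

open Finset

def IsCupIn (S : Finset ℕ) (f : ℕ → ℕ → ℝ) (t : ℕ) (q : ℕ → ℕ) : Prop :=
  (∀ i, i < t → q i ∈ S) ∧
  (∀ i, i + 1 < t → q i < q (i + 1)) ∧
  (∀ i, i + 2 < t → f (q i) (q (i + 1)) ≤ f (q (i + 1)) (q (i + 2)))

noncomputable def cupEnds (S : Finset ℕ) (f : ℕ → ℕ → ℝ) (t : ℕ) : Finset ℕ :=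
  open Classical in S.filter fun p => ∃ q, IsCupIn S f (t + 1) q ∧ q t = p

variable {S T : Finset ℕ} {f : ℕ → ℕ → ℝ} {t : ℕ} {q : ℕ → ℕ}

theorem isCup_iff_isCupIn_Icc {m : ℕ} : IsCup m f t q ↔ IsCupIn (Icc 1 m) f t q := by
  simp only [IsCup, IsCupIn, mem_Icc]

theorem isCap_iff_isCupIn_Icc_neg {m : ℕ} : IsCap m f t q ↔ IsCupIn (Icc 1 m) (-f) t q := by
  simp only [IsCap, IsCupIn, mem_Icc, Pi.neg_apply, neg_le_neg_iff]

theorem IsCupIn.mono (hST : S ⊆ T) (hq : IsCupIn S f t q) : IsCupIn T f t q :=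
  ⟨fun i hi => hST (hq.1 i hi), hq.2.1, hq.2.2⟩

theorem card_le_one_of_not_exists_isCupIn_two (h : ¬ ∃ q, IsCupIn S f 2 q) : #S ≤ 1 := by
  by_contra! hS
  obtain ⟨a, ha, b, hb, hab⟩ := one_lt_card.mp hS
  wlog hlt : a < b generalizing a b
  · exact this b hb a ha hab.symm (hab.lt_or_gt.resolve_left hlt)
  refine h ⟨fun | 0 => a | _ => b, fun i hi => ?_, fun i hi => ?_, fun i hi => by omega⟩
  · rcases i with _ | i <;> assumption
  · obtain rfl : i = 0 := by omega
    exact hlt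

theorem IsCupIn.snoc {x : ℕ} (hq : IsCupIn S f (t + 2) q) (hx : x ∈ S) (hlt : q (t + 1) < x)
    (hle : f (q t) (q (t + 1)) ≤ f (q (t + 1)) x) :
    IsCupIn S f (t + 3) (fun i => if i ≤ t + 1 then q i else x) := by
  refine ⟨fun i hi => ?_, fun i hi => ?_, fun i hi => ?_⟩
  · dsimp only
    split_ifs
    exacts [hq.1 i (by omega), hx]
  · by_cases hi' : i + 1 ≤ t + 1
    · simpa [hi', show i ≤ t + 1 by omega] using hq.2.1 i (by omega)
    · obtain rfl : i = t + 1 := by omega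
      simpa using hlt
  · by_cases hi' : i + 2 ≤ t + 1
    · simpa [hi', show i ≤ t + 1 by omega, show i + 1 ≤ t + 1 by omega]
        using hq.2.2 i (by omega)
    · obtain rfl : i = t := by omega
      simpa using hle

theorem IsCupIn.cons {x : ℕ} (hc : IsCupIn S f (t + 2) q) (hx : x ∈ S) (hlt : x < q 0)
    (hle : f x (q 0) ≤ f (q 0) (q 1)) :
    IsCupIn S f (t + 3) (fun | 0 => x | i + 1 => q i) := by
  refine ⟨fun i hi => ?_, fun i hi => ?_, fun i hi => ?_⟩
  · rcases i with _ | i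
    exacts [hx, hc.1 i (by omega)]
  · rcases i with _ | i
    exacts [hlt, hc.2.1 i (by omega)]
  · rcases i with _ | i
    exacts [hle, hc.2.2 i (by omega)]

theorem mem_cupEnds {p : ℕ} :
    p ∈ cupEnds S f t ↔ p ∈ S ∧ ∃ q, IsCupIn S f (t + 1) q ∧ q t = p := by
  classical
  unfold cupEnds
  convert mem_filter

theorem cupEnds_subset : cupEnds S f t ⊆ S := fun _ hp => (mem_cupEnds.mp hp).1

theorem not_exists_isCupIn_sdiff_cupEnds : ¬ ∃ q, IsCupIn (S \ cupEnds S f t) f (t + 1) q := by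
  rintro ⟨q, hq⟩
  have hend := mem_sdiff.mp (hq.1 t (by omega))
  exact hend.2 (mem_cupEnds.mpr ⟨hend.1, q, hq.mono sdiff_subset, rfl⟩)

theorem not_exists_isCupIn_neg_cupEnds {k l : ℕ} (hcup : ¬ ∃ q, IsCupIn S f (k + 3) q)
    (hcap : ¬ ∃ q, IsCupIn S (-f) (l + 3) q) :
    ¬ ∃ c, IsCupIn (cupEnds S f (k + 1)) (-f) (l + 2) c := by
  rintro ⟨c, hc⟩
  obtain ⟨-, q, hq, hqc⟩ := mem_cupEnds.mp (hc.1 0 (by omega))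
  have hc₁ : c 1 ∈ S := cupEnds_subset (hc.1 1 (by omega))
  have hc₀₁ : c 0 < c 1 := hc.2.1 0 (by omega)
  rcases le_total (f (q k) (q (k + 1))) (f (c 0) (c 1)) with hle | hge
  · exact hcup ⟨_, hq.snoc hc₁ (hqc ▸ hc₀₁) (hqc ▸ hle)⟩
  · refine hcap ⟨_, (hc.mono cupEnds_subset).cons (hq.1 k (by omega))
      (hqc ▸ hq.2.1 k (by omega)) ?_⟩
    simpa only [Pi.neg_apply, neg_le_neg_iff, ← hqc] using hge

theorem card_le_choose_of_not_exists_isCupIn (f : ℕ → ℕ → ℝ) :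
    ∀ (k l : ℕ) (S : Finset ℕ), (¬ ∃ q, IsCupIn S f (k + 2) q) →
      (¬ ∃ q, IsCupIn S (-f) (l + 2) q) → #S ≤ (k + l).choose k
  | 0, _, _, hcup, _ => by simpa using card_le_one_of_not_exists_isCupIn_two hcup
  | _ + 1, 0, _, _, hcap => by simpa using card_le_one_of_not_exists_isCupIn_two hcap
  | k + 1, l + 1, S, hcup, hcap => by
    have hrest : #(S \ cupEnds S f (k + 1)) ≤ (k + l + 1).choose k := by
      simpa only [add_assoc] using card_le_choose_of_not_exists_isCupIn f k (l + 1) _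
        not_exists_isCupIn_sdiff_cupEnds fun ⟨q, hq⟩ => hcap ⟨q, hq.mono sdiff_subset⟩
    have hends : #(cupEnds S f (k + 1)) ≤ (k + l + 1).choose (k + 1) := by
      simpa only [add_right_comm] using card_le_choose_of_not_exists_isCupIn f (k + 1) l _
        (fun ⟨q, hq⟩ => hcup ⟨q, hq.mono cupEnds_subset⟩)
        (not_exists_isCupIn_neg_cupEnds hcup hcap)
    calc #S = #(S \ cupEnds S f (k + 1)) + #(cupEnds S f (k + 1)) :=
          (card_sdiff_add_card_eq_card cupEnds_subset).symm
      _ ≤ (k + l + 1).choose k + (k + l + 1).choose (k + 1) := add_le_add hrest hends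
      _ = (k + 1 + (l + 1)).choose (k + 1) := by
          rw [show k + 1 + (l + 1) = k + l + 1 + 1 by omega, Nat.choose_succ_succ' (k + l + 1) k]

theorem cups_caps_bound_general (k l m : ℕ)
    (f : ℕ → ℕ → ℝ) (hf : IsFree m f (k + 2) (l + 2)) :
    m ≤ (k + l).choose k := by
  have hcup : ¬ ∃ q, IsCupIn (Icc 1 m) f (k + 2) q := by
    simpa only [isCup_iff_isCupIn_Icc] using hf.1
  have hcap : ¬ ∃ q, IsCupIn (Icc 1 m) (-f) (l + 2) q := by
    simpa only [isCap_iff_isCupIn_Icc_neg] using hf.2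
  simpa using card_le_choose_of_not_exists_isCupIn f k l _ hcup hcap

/-- Erdős–Szekeres cup–cap theorem for `(k+2, l+2)`-free functions:
`ES'(k+2, l+2) ≤ C(k+l, k)`. -/
theorem cups_caps_bound (k l m : ℕ) (hk : 1 ≤ k) (hl : 1 ≤ l) (hm : 1 ≤ m)
    (f : ℕ → ℕ → ℝ) (hf : IsFree m f (k + 2) (l + 2)) :
    m ≤ (k + l).choose k :=
  cups_caps_bound_general k l m f hf
end

section
/- Let k, l, m be positive integers, let f assign a real number f(i,j) to each pair 1 ≤ i < j ≤ m, and suppose f is (k+2, l+2)-free. Then for every pair 1 ≤ i < j ≤ m there exist x ∈ {1,…,k} and y ∈ {1,…,l} such that: (1) there is no (x+1)-cup with respect to f whose last two elements are (a, i) with f(a,i) ≤ f(i,j); (2) there is no (y+1)-cap whose last two elements are (b, i) with f(b,i) ≥ f(i,j); (3) there exists an (x+1)-cup whose last two elements are (a, j) with f(a,j) ≤ f(i,j); and (4) there exists a (y+1)-cap whose last two elements are (b, j) with f(b,j) ≥ f(i,j). (In the notation of the paper: α^i(x) > f(i,j) > β^i(y) and α^j(x) ≤ f(i,j) ≤ β^j(y).)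 -/
/-!
Fix `i < j`. If a cup ending in the pair `(a, i)` has `f(a,i) ≤ f(i,j)`, appending `j` gives a
cup one longer ending in `(i, j)`, and `f(i,j) ≤ f(i,j)` trivially. Starting from the 2-cup
`(i, j)` and climbing while the hypothesis holds, `(k+2)`-cup-freeness stops the climb at some
`x ≤ k`: this `x` satisfies (1) and (3). Caps of `f` are cups of `-f`, which gives `y`.
-/

/-- The paper's `α^a(s) ≤ v`: some `(s+1)`-cup ends at `a` with last value at most `v`. -/
def HasCupEndingAt (m : ℕ) (f : ℕ → ℕ → ℝ) (s a : ℕ) (v : ℝ) : Prop :=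
  ∃ q, IsCup m f (s + 1) q ∧ q s = a ∧ f (q (s - 1)) a ≤ v

section

variable {m : ℕ} {f : ℕ → ℕ → ℝ}

theorem IsCup.mono {t t' : ℕ} {q : ℕ → ℕ} (h : IsCup m f t q) (ht : t' ≤ t) :
    IsCup m f t' q :=
  ⟨fun i hi => h.1 i (hi.trans_le ht), fun i hi => h.2.1 i (hi.trans_le ht),
    fun i hi => h.2.2 i (hi.trans_le ht)⟩

theorem IsCup.snoc {s j : ℕ} {q : ℕ → ℕ} (hq : IsCup m f (s + 1) q) (hj : q s < j)
    (hjm : j ≤ m) (hv : 0 < s → f (q (s - 1)) (q s) ≤ f (q s) j) :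
    IsCup m f (s + 2) (fun t => if t ≤ s then q t else j) := by
  obtain ⟨hrange, hlt, hle⟩ := hq
  refine ⟨fun t ht => ?_, fun t ht => ?_, fun t ht => ?_⟩
  · by_cases hts : t ≤ s
    · simpa [hts] using hrange t (by omega)
    · have hqs := (hrange s (by omega)).1
      simp only [hts, if_false]
      omega
  · rcases Nat.lt_or_ge t s with hts | hts
    · simpa [hts.le, Nat.succ_le_of_lt hts] using hlt t (by omega)
    · obtain rfl : t = s := by omega
      simpa using hj
  · rcases Nat.lt_or_ge (t + 1) s with hts | hts
    · simpa [hts.le, Nat.succ_le_of_lt hts, (Nat.le_succ t).trans hts.le]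
        using hle t (by omega)
    · obtain rfl : s = t + 1 := by omega
      simpa using hv (Nat.succ_pos t)

theorem isCap_iff_isCup_neg {t : ℕ} {q : ℕ → ℕ} :
    IsCap m f t q ↔ IsCup m (fun a b => -f a b) t q := by
  simp only [IsCap, IsCup, neg_le_neg_iff]

theorem hasCupEndingAt_neg_iff {s a : ℕ} {v : ℝ} :
    HasCupEndingAt m (fun a b => -f a b) s a (-v) ↔
      ∃ q, IsCap m f (s + 1) q ∧ q s = a ∧ v ≤ f (q (s - 1)) a := by
  simp only [HasCupEndingAt, isCap_iff_isCup_neg, neg_le_neg_iff]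

theorem hasCupEndingAt_one {i j : ℕ} (hi : 1 ≤ i) (hij : i < j) (hj : j ≤ m) :
    HasCupEndingAt m f 1 j (f i j) := by
  have hsingle : IsCup m f 1 (fun _ => i) :=
    ⟨fun _ _ => ⟨hi, (hij.trans_le hj).le⟩, by simp, by simp⟩
  exact ⟨_, hsingle.snoc hij hj (by simp), by simp, by simp⟩

theorem HasCupEndingAt.succ {s i j : ℕ} (h : HasCupEndingAt m f s i (f i j))
    (hij : i < j) (hj : j ≤ m) : HasCupEndingAt m f (s + 1) j (f i j) := by
  obtain ⟨q, hq, rfl, hv⟩ := h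
  exact ⟨_, hq.snoc hij hj fun _ => hv, by simp, by simp⟩

theorem HasCupEndingAt.lt_of_cupFree {k s i j : ℕ} (hfree : ¬ ∃ q, IsCup m f (k + 2) q)
    (h : HasCupEndingAt m f s i (f i j)) (hij : i < j) (hj : j ≤ m) : s < k := by
  by_contra! hks
  obtain ⟨q, hq, -⟩ := h.succ hij hj
  exact hfree ⟨q, hq.mono (by omega)⟩

end

theorem Nat.exists_mem_Icc_not_and_of_step {P Q : ℕ → Prop} {k : ℕ} (hk : 1 ≤ k) (hQ : Q 1)
    (hstep : ∀ s, P s → s < k ∧ Q (s + 1)) :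
    ∃ x ∈ Finset.Icc 1 k, ¬ P x ∧ Q x := by
  by_contra! hPQ
  have hclimb : ∀ n, n + 1 ≤ k ∧ Q (n + 1) := by
    intro n
    induction n with
    | zero => exact ⟨hk, hQ⟩
    | succ n ih =>
      have hP : P (n + 1) :=
        not_imp_not.mp (hPQ (n + 1) (Finset.mem_Icc.mpr ⟨by omega, ih.1⟩)) ih.2
      exact hstep (n + 1) hP
  exact absurd (hclimb k).1 (by omega)

theorem exists_cup_threshold {k m : ℕ} (hk : 1 ≤ k) {f : ℕ → ℕ → ℝ}
    (hfree : ¬ ∃ q, IsCup m f (k + 2) q) {i j : ℕ} (hi : 1 ≤ i) (hij : i < j) (hj : j ≤ m) :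
    ∃ x ∈ Finset.Icc 1 k,
      ¬ HasCupEndingAt m f x i (f i j) ∧ HasCupEndingAt m f x j (f i j) :=
  Nat.exists_mem_Icc_not_and_of_step hk (hasCupEndingAt_one hi hij hj) fun _ h =>
    ⟨h.lt_of_cupFree hfree hij hj, h.succ hij hj⟩

theorem alpha_beta_lemma_general (k l m : ℕ) (hk : 1 ≤ k) (hl : 1 ≤ l)
    (f : ℕ → ℕ → ℝ) (hf : IsFree m f (k + 2) (l + 2)) :
    ∀ i j : ℕ, 1 ≤ i → i < j → j ≤ m →
      ∃ x ∈ Finset.Icc 1 k, ∃ y ∈ Finset.Icc 1 l,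
        -- (1) no (x+1)-cup ends with a pair (a, i) with f(a,i) ≤ f(i,j)
        (¬ ∃ q, IsCup m f (x + 1) q ∧ q x = i ∧ f (q (x - 1)) i ≤ f i j) ∧
        -- (2) no (y+1)-cap ends with a pair (b, i) with f(b,i) ≥ f(i,j)
        (¬ ∃ q, IsCap m f (y + 1) q ∧ q y = i ∧ f i j ≤ f (q (y - 1)) i) ∧
        -- (3) some (x+1)-cup ends with a pair (a, j) with f(a,j) ≤ f(i,j)
        (∃ q, IsCup m f (x + 1) q ∧ q x = j ∧ f (q (x - 1)) j ≤ f i j) ∧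
        -- (4) some (y+1)-cap ends with a pair (b, j) with f(b,j) ≥ f(i,j)
        (∃ q, IsCap m f (y + 1) q ∧ q y = j ∧ f i j ≤ f (q (y - 1)) j) := by
  intro i j hi hij hj
  obtain ⟨x, hx, hcup_i, hcup_j⟩ := exists_cup_threshold hk hf.1 hi hij hj
  have hcapFree : ¬ ∃ q, IsCup m (fun a b => -f a b) (l + 2) q := by
    simpa only [← isCap_iff_isCup_neg] using hf.2
  obtain ⟨y, hy, hcap_i, hcap_j⟩ := exists_cup_threshold hl hcapFree hi hij hj
  rw [hasCupEndingAt_neg_iff] at hcap_i hcap_j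
  exact ⟨x, hx, y, hy, hcup_i, hcap_i, hcup_j, hcap_j⟩

/-- Lemma 2 (first part): for a `(k+2, l+2)`-free `f` and indices `i < j`, there
are `x ∈ [k]`, `y ∈ [l]` with `α^i(x) > f(i,j) > β^i(y)` and
`α^j(x) ≤ f(i,j) ≤ β^j(y)`. -/
theorem alpha_beta_lemma (k l m : ℕ) (hk : 1 ≤ k) (hl : 1 ≤ l) (hm : 1 ≤ m)
    (f : ℕ → ℕ → ℝ) (hf : IsFree m f (k + 2) (l + 2)) :
    ∀ i j : ℕ, 1 ≤ i → i < j → j ≤ m →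
      ∃ x ∈ Finset.Icc 1 k, ∃ y ∈ Finset.Icc 1 l,
        -- (1) no (x+1)-cup ends with a pair (a, i) with f(a,i) ≤ f(i,j)
        (¬ ∃ q, IsCup m f (x + 1) q ∧ q x = i ∧ f (q (x - 1)) i ≤ f i j) ∧
        -- (2) no (y+1)-cap ends with a pair (b, i) with f(b,i) ≥ f(i,j)
        (¬ ∃ q, IsCap m f (y + 1) q ∧ q y = i ∧ f i j ≤ f (q (y - 1)) i) ∧
        -- (3) some (x+1)-cup ends with a pair (a, j) with f(a,j) ≤ f(i,j)
        (∃ q, IsCup m f (x + 1) q ∧ q x = j ∧ f (q (x - 1)) j ≤ f i j) ∧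
        -- (4) some (y+1)-cap ends with a pair (b, j) with f(b,j) ≥ f(i,j)
        (∃ q, IsCap m f (y + 1) q ∧ q y = j ∧ f i j ≤ f (q (y - 1)) j) :=
  alpha_beta_lemma_general k l m hk hl f hf
end

section
/- (Tóth–Valtr reduction.) Let n ≥ 3 and let N be a positive integer such that every finite set of at least N points in the plane in general position with pairwise distinct x-coordinates contains either n points in convex position or an (n−1)-cap. Then every finite set of at least N+1 points in the plane in general position contains n points in convex position; that is, ES(n) ≤ N+1. -/
/-- A finite set of points in the plane is in general position if no three of
its points are collinear. -/
def GeneralPosition (P : Finset (ℝ × ℝ)) : Prop :=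
  ∀ p ∈ P, ∀ q ∈ P, ∀ r ∈ P, p ≠ q → p ≠ r → q ≠ r →
    ¬ Collinear ℝ ({p, q, r} : Set (ℝ × ℝ))

/-- A finite set of points is in convex position if no point of the set lies in
the convex hull of the other points. -/
def ConvexPosition (S : Finset (ℝ × ℝ)) : Prop :=
  ∀ p ∈ S, p ∉ convexHull ℝ ((S : Set (ℝ × ℝ)) \ {p})

/-- The ptSlope of the line through two points (with distinct x-coordinates). -/
noncomputable def ptSlope (p q : ℝ × ℝ) : ℝ := (q.2 - p.2) / (q.1 - p.1)

/-- The points of `P` have pairwise distinct x-coordinates. -/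
def DistinctX (P : Finset (ℝ × ℝ)) : Prop :=
  ∀ p ∈ P, ∀ q ∈ P, p ≠ q → p.1 ≠ q.1

/-- A `t`-cup in `P`: a sequence `q 0, …, q (t-1)` of points of `P` with strictly
increasing x-coordinates and non-decreasing slopes of consecutive segments. -/
def IsGCup (P : Finset (ℝ × ℝ)) (t : ℕ) (q : ℕ → ℝ × ℝ) : Prop :=
  (∀ i, i < t → q i ∈ P) ∧
  (∀ i, i + 1 < t → (q i).1 < (q (i + 1)).1) ∧
  (∀ i, i + 2 < t → ptSlope (q i) (q (i + 1)) ≤ ptSlope (q (i + 1)) (q (i + 2)))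

/-- A `t`-cap in `P`: a sequence of points of `P` with strictly increasing
x-coordinates and non-increasing slopes of consecutive segments. -/
def IsGCap (P : Finset (ℝ × ℝ)) (t : ℕ) (q : ℕ → ℝ × ℝ) : Prop :=
  (∀ i, i < t → q i ∈ P) ∧
  (∀ i, i + 1 < t → (q i).1 < (q (i + 1)).1) ∧
  (∀ i, i + 2 < t → ptSlope (q (i + 1)) (q (i + 2)) ≤ ptSlope (q i) (q (i + 1)))

/-!
Pick a direction in which the points of `P` have pairwise distinct heights and let `p` be the
lowest point. After a shear putting `p` at the origin, the projective map `(x, y) ↦ (x/y, -1/y)`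
sends `p` to the point at infinity straight below and `P \ {p}` to a set `Q` of `|P| - 1` points.
It preserves collinearity, so `Q` is in general position, and two points of `Q` share an
x-coordinate only if they are collinear with `p`. Pulled back to the upper half-plane, a line
exposing a point of `Q` becomes a line exposing its preimage, so `n` points of `Q` in convex
position come from `n` points of `P` in convex position. Every point of an `(n-1)`-cap of `Q` is
exposed by a line with the rest of the cap below it, hence below it also lies the point at
infinity `p`: the cap together with `p` gives `n` points of `P` in convex position.
-/

namespace TothValtr

section StrictlyExposed

variable {E : Type*}

def StrictlyExposed [AddCommGroup E] [Module ℝ E] (A : Set E) (s : E) : Prop :=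
  ∃ f : E →ₗ[ℝ] ℝ, ∀ x ∈ A, x ≠ s → f x < f s

theorem StrictlyExposed.notMem_convexHull_diff [AddCommGroup E] [Module ℝ E] {A : Set E} {s : E}
    (h : StrictlyExposed A s) : s ∉ convexHull ℝ (A \ {s}) := by
  obtain ⟨f, hf⟩ := h
  intro hs
  have := convexHull_min (t := {x | f x < f s}) (fun x hx => hf x hx.1 hx.2)
    (convex_halfSpace_lt f.isLinear _) hs
  exact lt_irrefl (f s) this

theorem strictlyExposed_of_notMem_convexHull_diff [NormedAddCommGroup E] [NormedSpace ℝ E]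
    {A : Set E} (hA : A.Finite) {s : E} (hs : s ∉ convexHull ℝ (A \ {s})) :
    StrictlyExposed A s := by
  obtain ⟨f, u, hfu, hus⟩ := geometric_hahn_banach_closed_point (convex_convexHull ℝ _)
    ((hA.sdiff (t := {s})).isClosed_convexHull ℝ) hs
  exact ⟨f, fun x hx hxs => (hfu x (subset_convexHull ℝ _ ⟨hx, hxs⟩)).trans hus⟩

theorem convexPosition_iff_forall_strictlyExposed {S : Finset (ℝ × ℝ)} :
    ConvexPosition S ↔ ∀ s ∈ S, StrictlyExposed (S : Set (ℝ × ℝ)) s :=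
  ⟨fun h s hs => strictlyExposed_of_notMem_convexHull_diff S.finite_toSet (h s hs),
    fun h s hs => (h s hs).notMem_convexHull_diff⟩

end StrictlyExposed

def cross (a b c : ℝ × ℝ) : ℝ := (b.1 - a.1) * (c.2 - a.2) - (b.2 - a.2) * (c.1 - a.1)

theorem collinear_iff_cross_eq_zero (a b c : ℝ × ℝ) :
    Collinear ℝ ({a, b, c} : Set (ℝ × ℝ)) ↔ cross a b c = 0 := by
  constructor
  · rw [collinear_iff_of_mem (Set.mem_insert a {b, c})]
    rintro ⟨v, hv⟩
    obtain ⟨r, rfl⟩ := hv b (by simp)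
    obtain ⟨r', rfl⟩ := hv c (by simp)
    simp only [cross, vadd_eq_add, Prod.fst_add, Prod.snd_add, Prod.smul_fst, Prod.smul_snd,
      smul_eq_mul]
    ring
  · intro h
    rcases eq_or_ne a b with rfl | hab
    · simpa using collinear_pair ℝ a c
    rw [collinear_iff_of_mem (Set.mem_insert a {b, c})]
    refine ⟨b - a, ?_⟩
    simp only [Set.mem_insert_iff, Set.mem_singleton_iff, forall_eq_or_imp, forall_eq]
    refine ⟨⟨0, by simp⟩, ⟨1, by simp⟩, ?_⟩
    suffices ∃ r : ℝ, c.1 - a.1 = r * (b.1 - a.1) ∧ c.2 - a.2 = r * (b.2 - a.2) by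
      obtain ⟨r, h1, h2⟩ := this
      refine ⟨r, Prod.ext ?_ ?_⟩ <;>
        simp only [vadd_eq_add, Prod.fst_add, Prod.snd_add, Prod.smul_fst, Prod.smul_snd,
          Prod.fst_sub, Prod.snd_sub, smul_eq_mul] <;> linarith
    simp only [cross] at h
    by_cases h1 : b.1 - a.1 = 0
    · have h2 : b.2 - a.2 ≠ 0 := fun h2 => hab (Prod.ext (by linarith) (by linarith))
      refine ⟨(c.2 - a.2) / (b.2 - a.2), ?_, by field_simp⟩
      field_simp
      linear_combination -h
    · refine ⟨(c.1 - a.1) / (b.1 - a.1), by field_simp, ?_⟩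
      field_simp
      linear_combination h

theorem exists_between_of_imp {α : Type*} [LinearOrder α] [DenselyOrdered α] [NoMinOrder α]
    [NoMaxOrder α] {a b : α} {P Q : Prop} (h : P → Q → a < b) :
    ∃ m, (P → a < m) ∧ (Q → m < b) := by
  by_cases hP : P <;> by_cases hQ : Q
  · obtain ⟨m, ham, hmb⟩ := exists_between (h hP hQ)
    exact ⟨m, fun _ => ham, fun _ => hmb⟩
  · obtain ⟨m, hm⟩ := exists_gt a
    exact ⟨m, fun _ => hm, fun h => absurd h hQ⟩
  · obtain ⟨m, hm⟩ := exists_lt b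
    exact ⟨m, fun h => absurd h hP, fun _ => hm⟩
  · exact ⟨a, fun h => absurd h hP, fun h => absurd h hQ⟩

theorem apply_lt_apply_of_peak {β : Type*} [Preorder β] {D : ℕ → β} {i k : ℕ}
    (hup : ∀ j < i, D j < D (j + 1)) (hdown : ∀ j, i ≤ j → j + 1 < k → D (j + 1) < D j)
    {j : ℕ} (hjk : j < k) (hji : j ≠ i) : D j < D i := by
  rcases hji.lt_or_gt with hlt | hgt
  · refine strictMonoOn_of_lt_succ Set.ordConnected_Iic (fun a _ _ ha => ?_) hlt.le le_rfl hlt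
    simpa [Order.succ_eq_add_one] using hup a (Order.succ_le_iff.mp ha)
  · refine strictAntiOn_of_succ_lt (s := Set.Ico i k) Set.ordConnected_Ico
      (fun a _ ha ha' => ?_) ⟨le_rfl, hgt.trans hjk⟩ ⟨hgt.le, hjk⟩ hgt
    simpa [Order.succ_eq_add_one] using hdown a ha.1 ha'.2

theorem cross_eq_zero_of_ptSlope_eq {a b c : ℝ × ℝ} (hab : a.1 ≠ b.1) (hbc : b.1 ≠ c.1)
    (h : ptSlope a b = ptSlope b c) : cross a b c = 0 := by
  rw [ptSlope, ptSlope, div_eq_div_iff (sub_ne_zero.mpr hab.symm) (sub_ne_zero.mpr hbc.symm)] at h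
  simp only [cross]
  linear_combination -h

namespace IsGCap

variable {P : Finset (ℝ × ℝ)} {k : ℕ} {q : ℕ → ℝ × ℝ}

theorem fst_strictMonoOn (hq : IsGCap P k q) : StrictMonoOn (fun i => (q i).1) (Set.Iio k) :=
  strictMonoOn_of_lt_succ Set.ordConnected_Iio
    fun a _ _ ha => by simpa [Order.succ_eq_add_one] using hq.2.1 a ha

theorem fst_lt (hq : IsGCap P k q) {i j : ℕ} (hij : i < j) (hjk : j < k) :
    (q i).1 < (q j).1 :=
  fst_strictMonoOn hq (Set.mem_Iio.mpr (hij.trans hjk)) hjk hij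

theorem injOn (hq : IsGCap P k q) : Set.InjOn q (Set.Iio k) :=
  Set.InjOn.of_comp (g := Prod.fst) (fst_strictMonoOn hq).injOn

theorem ptSlope_le (hq : IsGCap P k q) {i j : ℕ} (hij : i ≤ j) (hjk : j + 1 < k) :
    ptSlope (q j) (q (j + 1)) ≤ ptSlope (q i) (q (i + 1)) :=
  antitoneOn_of_succ_le (f := fun i => ptSlope (q i) (q (i + 1))) (s := Set.Iio (k - 1))
    Set.ordConnected_Iio
    (fun a _ _ ha => by
      simpa [Order.succ_eq_add_one] using hq.2.2 a (by simp [Order.succ_eq_add_one] at ha; omega))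
    (Set.mem_Iio.mpr (by omega)) (Set.mem_Iio.mpr (by omega)) hij

theorem ptSlope_lt (hP : GeneralPosition P) (hq : IsGCap P k q) {i : ℕ} (hi : i + 2 < k) :
    ptSlope (q (i + 1)) (q (i + 2)) < ptSlope (q i) (q (i + 1)) := by
  have h01 := fst_lt hq (by omega : i < i + 1) (by omega)
  have h12 := fst_lt hq (by omega : i + 1 < i + 2) hi
  refine (hq.2.2 i hi).lt_of_ne fun h => hP _ (hq.1 i (by omega)) _ (hq.1 (i + 1) (by omega))
    _ (hq.1 (i + 2) hi) (fun he => h01.ne (congrArg Prod.fst he))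
    (fun he => (h01.trans h12).ne (congrArg Prod.fst he)) (fun he => h12.ne (congrArg Prod.fst he))
    ((collinear_iff_cross_eq_zero _ _ _).mpr (cross_eq_zero_of_ptSlope_eq h01.ne h12.ne h.symm))

theorem exists_line_above (hP : GeneralPosition P) (hq : IsGCap P k q) {i : ℕ} (hi : i < k) :
    ∃ m : ℝ, ∀ j < k, j ≠ i → (q j).2 < (q i).2 + m * ((q j).1 - (q i).1) := by
  -- `m` lies strictly between the slopes of the cap edges at `q i`; an endpoint has only one
  obtain ⟨m, hright, hleft⟩ := exists_between_of_imp (P := i + 1 < k) (Q := 0 < i)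
    (a := ptSlope (q i) (q (i + 1))) (b := ptSlope (q (i - 1)) (q i)) fun _ hi0 => by
      have := ptSlope_lt hP hq (i := i - 1) (by omega)
      rwa [Nat.sub_add_cancel hi0, show i - 1 + 2 = i + 1 by omega] at this
  have hstep : ∀ j, j + 1 < k → ((q (j + 1)).2 - m * (q (j + 1)).1) - ((q j).2 - m * (q j).1)
      = (ptSlope (q j) (q (j + 1)) - m) * ((q (j + 1)).1 - (q j).1) := fun j hj => by
    rw [sub_mul, ptSlope, div_mul_cancel₀ _ (sub_pos.mpr (hq.2.1 j hj)).ne']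
    ring
  have hup : ∀ j < i, (q j).2 - m * (q j).1 < (q (j + 1)).2 - m * (q (j + 1)).1 := by
    intro j hj
    have hsl := ptSlope_le hq (Nat.le_sub_one_of_lt hj) (by omega)
    rw [Nat.sub_add_cancel (by omega)] at hsl
    nlinarith [hstep j (by omega), hleft (by omega), hq.2.1 j (by omega)]
  have hdown : ∀ j, i ≤ j → j + 1 < k →
      (q (j + 1)).2 - m * (q (j + 1)).1 < (q j).2 - m * (q j).1 := by
    intro j hij hj
    nlinarith [hstep j hj, ptSlope_le hq hij hj, hright (by omega), hq.2.1 j hj]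
  refine ⟨m, fun j hjk hji => ?_⟩
  have := apply_lt_apply_of_peak (D := fun j => (q j).2 - m * (q j).1) hup hdown hjk hji
  linarith

end IsGCap

section Projection

variable (t : ℝ) (p : ℝ × ℝ)

def height (z : ℝ × ℝ) : ℝ := t * (z.1 - p.1) + (z.2 - p.2)

noncomputable def proj (z : ℝ × ℝ) : ℝ × ℝ := ((z.1 - p.1) / height t p z, -1 / height t p z)

variable {t p}

theorem cross_proj {a b c : ℝ × ℝ} (ha : height t p a ≠ 0) (hb : height t p b ≠ 0)
    (hc : height t p c ≠ 0) :
    cross (proj t p a) (proj t p b) (proj t p c) * (height t p a * height t p b * height t p c)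
      = cross a b c := by
  simp only [cross, proj]
  field_simp
  simp only [height]
  ring

theorem cross_eq_zero_of_proj_fst_eq {a b : ℝ × ℝ} (ha : height t p a ≠ 0)
    (hb : height t p b ≠ 0) (h : (proj t p a).1 = (proj t p b).1) : cross p a b = 0 := by
  simp only [proj, div_eq_div_iff ha hb] at h
  simp only [cross, height] at h ⊢
  linear_combination h

theorem proj_injOn : Set.InjOn (proj t p) {z | height t p z ≠ 0} := by
  intro a ha b hb h
  have h2 := congrArg Prod.snd h
  simp only [proj, div_eq_div_iff ha hb] at h2
  have hh : height t p a = height t p b := by linarith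
  have h1 := congrArg Prod.fst h
  simp only [proj, hh, div_left_inj' (show height t p b ≠ 0 from hb)] at h1
  have h1' : a.1 = b.1 := by linarith
  simp only [height, h1'] at hh
  exact Prod.ext h1' (by linarith)

theorem height_mul_apply_proj (f : ℝ × ℝ →ₗ[ℝ] ℝ) {z : ℝ × ℝ} (hz : height t p z ≠ 0) :
    height t p z * f (proj t p z) = f (1, 0) * (z.1 - p.1) - f (0, 1) := by
  have hf : ∀ w : ℝ × ℝ, f w = w.1 * f (1, 0) + w.2 * f (0, 1) := fun w => by
    conv_lhs => rw [show w = w.1 • ((1 : ℝ), (0 : ℝ)) + w.2 • (0, 1) by ext <;> simp]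
    rw [map_add, map_smul, map_smul, smul_eq_mul, smul_eq_mul]
  rw [hf]
  simp only [proj]
  field_simp
  ring

theorem strictlyExposed_of_proj {A : Set (ℝ × ℝ)} {s : ℝ × ℝ} (f : ℝ × ℝ →ₗ[ℝ] ℝ)
    (hs : 0 < height t p s)
    (hA : ∀ x ∈ A, x ≠ s → x ≠ p → 0 < height t p x ∧ f (proj t p x) < f (proj t p s))
    (hp : p ∈ A → 0 < f (0, 1)) : StrictlyExposed A s := by
  set c := f (proj t p s)
  -- after multiplying by `height t p x > 0`, comparing `f (proj t p x)` with `c` becomes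
  -- comparing values of an affine function of `x`
  refine ⟨(f (1, 0) - c * t) • LinearMap.fst ℝ ℝ ℝ - c • LinearMap.snd ℝ ℝ ℝ,
    fun x hx hxs => ?_⟩
  have hcs := height_mul_apply_proj f hs.ne'
  simp only [LinearMap.sub_apply, LinearMap.smul_apply, LinearMap.fst_apply,
    LinearMap.snd_apply, smul_eq_mul]
  simp only [height] at hcs
  by_cases hxp : x = p
  · subst hxp
    linarith [hp hx]
  · obtain ⟨hx0, hlt⟩ := hA x hx hxs hxp
    have hcx := height_mul_apply_proj f hx0.ne'
    have := mul_lt_mul_of_pos_left hlt hx0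
    simp only [height] at hcx this
    linarith

theorem strictlyExposed_of_height_pos {A : Set (ℝ × ℝ)}
    (hA : ∀ x ∈ A, x ≠ p → 0 < height t p x) : StrictlyExposed A p := by
  refine ⟨-(t • LinearMap.fst ℝ ℝ ℝ + LinearMap.snd ℝ ℝ ℝ), fun x hx hxp => ?_⟩
  have := hA x hx hxp
  simp only [height] at this
  simp only [LinearMap.neg_apply, LinearMap.add_apply, LinearMap.smul_apply, LinearMap.fst_apply,
    LinearMap.snd_apply, smul_eq_mul]
  linarith

end Projection

theorem exists_height_pos {P : Finset (ℝ × ℝ)} (hP : P.Nonempty) :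
    ∃ t, ∃ p ∈ P, ∀ z ∈ P.erase p, 0 < height t p z := by
  obtain ⟨t, ht⟩ := Infinite.exists_notMem_finset
    ((P ×ˢ P).image fun ab : (ℝ × ℝ) × (ℝ × ℝ) => (ab.2.2 - ab.1.2) / (ab.1.1 - ab.2.1))
  have hinj : Set.InjOn (fun z : ℝ × ℝ => t * z.1 + z.2) P := by
    intro a ha b hb hab
    by_cases h1 : a.1 = b.1
    · simp only [h1] at hab
      exact Prod.ext h1 (by linarith)
    · refine absurd (Finset.mem_image.mpr ⟨(a, b), Finset.mem_product.mpr ⟨ha, hb⟩, ?_⟩) ht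
      rw [div_eq_iff (sub_ne_zero.mpr h1)]
      linarith
  obtain ⟨p, hp, hmin⟩ := P.exists_min_image (fun z => t * z.1 + z.2) hP
  refine ⟨t, p, hp, fun z hz => ?_⟩
  obtain ⟨hzp, hz⟩ := Finset.mem_erase.mp hz
  have := lt_of_le_of_ne (hmin z hz) fun h => hzp (hinj hz hp h.symm)
  simp only [height]
  linarith

section Lift

variable {P : Finset (ℝ × ℝ)} {t : ℝ} {p : ℝ × ℝ}

theorem injOn_proj_erase (hpos : ∀ z ∈ P.erase p, 0 < height t p z) :
    Set.InjOn (proj t p) (P.erase p) :=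
  proj_injOn.mono fun z hz => (hpos z hz).ne'

theorem generalPosition_image_proj (hpos : ∀ z ∈ P.erase p, 0 < height t p z)
    (hP : GeneralPosition P) : GeneralPosition ((P.erase p).image (proj t p)) := by
  simp only [GeneralPosition, Finset.forall_mem_image]
  intro a ha b hb c hc hab hac hbc hcol
  rw [collinear_iff_cross_eq_zero] at hcol
  have := cross_proj (hpos a ha).ne' (hpos b hb).ne' (hpos c hc).ne'
  rw [hcol, zero_mul, eq_comm, ← collinear_iff_cross_eq_zero] at this
  exact hP a (Finset.mem_of_mem_erase ha) b (Finset.mem_of_mem_erase hb) c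
    (Finset.mem_of_mem_erase hc) (by rintro rfl; exact hab rfl) (by rintro rfl; exact hac rfl)
    (by rintro rfl; exact hbc rfl) this

theorem distinctX_image_proj (hpos : ∀ z ∈ P.erase p, 0 < height t p z) (hp : p ∈ P)
    (hP : GeneralPosition P) : DistinctX ((P.erase p).image (proj t p)) := by
  simp only [DistinctX, Finset.forall_mem_image]
  intro a ha b hb hab h
  refine hP p hp a (Finset.mem_of_mem_erase ha) b (Finset.mem_of_mem_erase hb)
    (Finset.ne_of_mem_erase ha).symm (Finset.ne_of_mem_erase hb).symm
    (by rintro rfl; exact hab rfl) ?_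
  exact (collinear_iff_cross_eq_zero p a b).mpr
    (cross_eq_zero_of_proj_fst_eq (hpos a ha).ne' (hpos b hb).ne' h)

theorem card_filter_proj_mem (hpos : ∀ z ∈ P.erase p, 0 < height t p z)
    {T : Finset (ℝ × ℝ)} (hT : T ⊆ (P.erase p).image (proj t p)) :
    ((P.erase p).filter (proj t p · ∈ T)).card = T.card := by
  rw [← Finset.card_image_of_injOn ((injOn_proj_erase hpos).mono (Finset.filter_subset _ _)),
    ← Finset.filter_image (p := (· ∈ T)), Finset.filter_mem_eq_inter, Finset.inter_eq_right.mpr hT]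

theorem exists_convexPosition_of_subset_image_proj (hpos : ∀ z ∈ P.erase p, 0 < height t p z)
    {S' : Finset (ℝ × ℝ)} (hS'Q : S' ⊆ (P.erase p).image (proj t p)) (hS' : ConvexPosition S') :
    ∃ S ⊆ P, S.card = S'.card ∧ ConvexPosition S := by
  refine ⟨(P.erase p).filter (proj t p · ∈ S'), (Finset.filter_subset _ _).trans (P.erase_subset p),
    card_filter_proj_mem hpos hS'Q, ?_⟩
  rw [convexPosition_iff_forall_strictlyExposed] at hS' ⊢
  intro s hs
  rw [Finset.mem_filter] at hs
  obtain ⟨f, hf⟩ := hS' _ hs.2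
  refine strictlyExposed_of_proj f (hpos s hs.1) (fun x hx hxs _ => ?_) fun hp => ?_
  · rw [Finset.mem_coe, Finset.mem_filter] at hx
    exact ⟨hpos x hx.1, hf _ hx.2 fun h => hxs (injOn_proj_erase hpos hx.1 hs.1 h)⟩
  · simp at hp

theorem exists_convexPosition_of_isGCap_image_proj (hpos : ∀ z ∈ P.erase p, 0 < height t p z)
    (hp : p ∈ P) (hP : GeneralPosition P) {k : ℕ} {q : ℕ → ℝ × ℝ}
    (hq : IsGCap ((P.erase p).image (proj t p)) k q) :
    ∃ S ⊆ P, S.card = k + 1 ∧ ConvexPosition S := by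
  set C := (Finset.range k).image q
  have hCQ : C ⊆ (P.erase p).image (proj t p) := by
    simpa [C, Finset.image_subset_iff] using hq.1
  have hCcard : C.card = k := by
    rw [Finset.card_image_of_injOn (by simpa using IsGCap.injOn hq), Finset.card_range]
  set L := (P.erase p).filter (proj t p · ∈ C)
  have hpL : p ∉ L := by simp [L]
  refine ⟨insert p L, Finset.insert_subset hp ((Finset.filter_subset _ _).trans (P.erase_subset p)),
    by rw [Finset.card_insert_of_notMem hpL, card_filter_proj_mem hpos hCQ, hCcard], ?_⟩
  rw [convexPosition_iff_forall_strictlyExposed]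
  intro s hs
  rcases Finset.mem_insert.mp hs with rfl | hs
  · refine strictlyExposed_of_height_pos fun x hx hxs =>
      hpos x (Finset.filter_subset _ _ (?_ : x ∈ L))
    simpa [hxs] using hx
  · rw [Finset.mem_filter] at hs
    obtain ⟨i, hi, hqi⟩ := Finset.mem_image.mp hs.2
    obtain ⟨m, hm⟩ := IsGCap.exists_line_above (generalPosition_image_proj hpos hP) hq
      (Finset.mem_range.mp hi)
    refine strictlyExposed_of_proj (-m • LinearMap.fst ℝ ℝ ℝ + LinearMap.snd ℝ ℝ ℝ) (hpos s hs.1)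
      (fun x hx hxs hxp => ?_) fun _ => by simp
    have hxL : x ∈ L := by simpa [hxp] using hx
    obtain ⟨hxP, hxC⟩ := Finset.mem_filter.mp hxL
    obtain ⟨j, hj, hqj⟩ := Finset.mem_image.mp hxC
    have hji : j ≠ i := by
      rintro rfl
      exact hxs (injOn_proj_erase hpos hxP hs.1 (hqj.symm.trans hqi))
    refine ⟨hpos x hxP, ?_⟩
    have := hm j (Finset.mem_range.mp hj) hji
    rw [← hqi, ← hqj]
    simp only [LinearMap.add_apply, LinearMap.smul_apply, LinearMap.fst_apply, LinearMap.snd_apply,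
      smul_eq_mul]
    linarith

end Lift

end TothValtr

open TothValtr

theorem toth_valtr_reduction_general (n N : ℕ) (hn : 3 ≤ n)
    (h : ∀ P : Finset (ℝ × ℝ), GeneralPosition P → DistinctX P → N ≤ P.card →
      (∃ S ⊆ P, S.card = n ∧ ConvexPosition S) ∨ (∃ q, IsGCap P (n - 1) q)) :
    ∀ P : Finset (ℝ × ℝ), GeneralPosition P → N + 1 ≤ P.card →
      ∃ S ⊆ P, S.card = n ∧ ConvexPosition S := by
  intro P hP hcard
  obtain ⟨t, p, hp, hpos⟩ := exists_height_pos (P := P) (Finset.card_pos.mp (by omega))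
  have hcard' : N ≤ ((P.erase p).image (proj t p)).card := by
    rw [Finset.card_image_of_injOn (injOn_proj_erase hpos), Finset.card_erase_of_mem hp]
    omega
  rcases h _ (generalPosition_image_proj hpos hP) (distinctX_image_proj hpos hp hP) hcard' with
    ⟨S', hS'Q, hS'card, hS'⟩ | ⟨q, hq⟩
  · rw [← hS'card]
    exact exists_convexPosition_of_subset_image_proj hpos hS'Q hS'
  · rw [show n = n - 1 + 1 by omega]
    exact exists_convexPosition_of_isGCap_image_proj hpos hp hP hq

/-- Tóth–Valtr reduction: if every `N`-point set in general position with
pairwise distinct x-coordinates contains `n` points in convex position or an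
`(n-1)`-cap, then `ES(n) ≤ N + 1`. -/
theorem toth_valtr_reduction (n N : ℕ) (hn : 3 ≤ n) (hN : 1 ≤ N)
    (h : ∀ P : Finset (ℝ × ℝ), GeneralPosition P → DistinctX P → N ≤ P.card →
      (∃ S ⊆ P, S.card = n ∧ ConvexPosition S) ∨ (∃ q, IsGCap P (n - 1) q)) :
    ∀ P : Finset (ℝ × ℝ), GeneralPosition P → N + 1 ≤ P.card →
      ∃ S ⊆ P, S.card = n ∧ ConvexPosition S :=
  toth_valtr_reduction_general n N hn h
end

section
/- Let n ≥ 6 and let P be a finite set of points in the plane in general position with pairwise distinct x-coordinates, such that P contains no n points in convex position, no n-cup, and no (n−1)-cap. Suppose a point q ∈ P is simultaneously: the last point of an (n−2)-cup V = (v₁,…,v_{n−3}, q), the first point of an (n−2)-cap U = (q, u₂,…,u_{n−2}), and the first point of an (n−1)-cup W = (q, w₂,…,w_{n−1}). Then u₂ = w_{n−1}. -/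
section Slope

variable {a b c : ℝ × ℝ}

theorem ptSlope_le_iff_left (hab : a.1 < b.1) (hbc : b.1 < c.1) :
    ptSlope a b ≤ ptSlope b c ↔ ptSlope a b ≤ ptSlope a c := by
  unfold ptSlope
  rw [div_le_div_iff₀ (by linarith) (by linarith), div_le_div_iff₀ (by linarith) (by linarith)]
  constructor <;> intro h <;> nlinarith

theorem ptSlope_le_iff_right (hab : a.1 < b.1) (hbc : b.1 < c.1) :
    ptSlope a b ≤ ptSlope b c ↔ ptSlope a c ≤ ptSlope b c := by
  unfold ptSlope
  rw [div_le_div_iff₀ (by linarith) (by linarith), div_le_div_iff₀ (by linarith) (by linarith)]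
  constructor <;> intro h <;> nlinarith

theorem ptSlope_lt_iff_left (hab : a.1 < b.1) (hbc : b.1 < c.1) :
    ptSlope a b < ptSlope b c ↔ ptSlope a b < ptSlope a c := by
  unfold ptSlope
  rw [div_lt_div_iff₀ (by linarith) (by linarith), div_lt_div_iff₀ (by linarith) (by linarith)]
  constructor <;> intro h <;> nlinarith

theorem ptSlope_lt_iff_right (hab : a.1 < b.1) (hbc : b.1 < c.1) :
    ptSlope a b < ptSlope b c ↔ ptSlope a c < ptSlope b c := by
  unfold ptSlope
  rw [div_lt_div_iff₀ (by linarith) (by linarith), div_lt_div_iff₀ (by linarith) (by linarith)]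
  constructor <;> intro h <;> nlinarith

theorem collinear_of_ptSlope_eq (hab : a.1 < b.1) (hac : a.1 < c.1)
    (h : ptSlope a b = ptSlope a c) : Collinear ℝ ({a, b, c} : Set (ℝ × ℝ)) := by
  have hc : AffineMap.lineMap a b ((c.1 - a.1) / (b.1 - a.1)) = c := by
    unfold ptSlope at h
    have hba : b.1 - a.1 ≠ 0 := by linarith
    ext <;> simp only [AffineMap.lineMap_apply, vsub_eq_sub, vadd_eq_add, Prod.fst_add,
      Prod.snd_add, Prod.smul_fst, Prod.smul_snd, Prod.fst_sub, Prod.snd_sub, smul_eq_mul]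
    · field_simp; ring
    · rw [div_mul_eq_mul_div, mul_div_assoc, h, mul_div_cancel₀ _ (by linarith)]; ring
  have hmem : c ∈ line[ℝ, a, b] := hc ▸ AffineMap.lineMap_mem_affineSpan_pair _ _ _
  have hperm : ({a, b, c} : Set (ℝ × ℝ)) = {c, a, b} := by
    ext; simp only [Set.mem_insert_iff, Set.mem_singleton_iff]; tauto
  rw [hperm]
  exact collinear_insert_of_mem_affineSpan_pair hmem

end Slope

section Intercept

variable {a b u : ℝ × ℝ} {s : ℝ}

def intercept (s : ℝ) : ℝ × ℝ →ₗ[ℝ] ℝ := LinearMap.snd ℝ ℝ ℝ - s • LinearMap.fst ℝ ℝ ℝ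

@[simp]
theorem intercept_apply (s : ℝ) (p : ℝ × ℝ) : intercept s p = p.2 - s * p.1 := rfl

theorem intercept_lt_intercept_iff (hab : a.1 < b.1) :
    intercept s a < intercept s b ↔ s < ptSlope a b := by
  rw [intercept_apply, intercept_apply, ptSlope, lt_div_iff₀ (by linarith)]
  constructor <;> intro h <;> linarith

theorem intercept_lt_intercept_iff' (hab : a.1 < b.1) :
    intercept s b < intercept s a ↔ ptSlope a b < s := by
  rw [intercept_apply, intercept_apply, ptSlope, div_lt_iff₀ (by linarith)]
  constructor <;> intro h <;> linarith

theorem intercept_le_intercept_iff' (hab : a.1 < b.1) :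
    intercept s b ≤ intercept s a ↔ ptSlope a b ≤ s := by
  simpa only [not_lt] using (intercept_lt_intercept_iff (s := s) hab).not

theorem min_intercept_lt_of_ptSlope_lt (hau : a.1 < u.1) (hub : u.1 < b.1)
    (h : ptSlope a b < ptSlope a u) : min (intercept s a) (intercept s b) < intercept s u := by
  rw [min_lt_iff]
  by_contra! hle
  simp only [intercept_apply] at hle
  unfold ptSlope at h
  rw [div_lt_div_iff₀ (by linarith) (by linarith)] at h
  nlinarith [mul_nonneg (sub_nonneg.2 hub.le) (sub_nonneg.2 hle.1),
    mul_nonneg (sub_nonneg.2 hau.le) (sub_nonneg.2 hle.2)]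

end Intercept

theorem notMem_convexHull_diff_singleton_of_forall_lt {E : Type*} [AddCommGroup E] [Module ℝ E]
    {s : Set E} {p : E} (f : E →ₗ[ℝ] ℝ) (h : ∀ x ∈ s, x ≠ p → f p < f x) :
    p ∉ convexHull ℝ (s \ {p}) := fun hp =>
  lt_irrefl (f p) <| convexHull_min (fun x hx => h x hx.1 hx.2)
    (convex_halfSpace_gt f.isLinear (f p)) hp

theorem GeneralPosition.ptSlope_ne {P : Finset (ℝ × ℝ)} {a b c : ℝ × ℝ} (hgp : GeneralPosition P)
    (ha : a ∈ P) (hb : b ∈ P) (hc : c ∈ P) (hab : a.1 < b.1) (hac : a.1 < c.1) (hbc : b ≠ c) :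
    ptSlope a b ≠ ptSlope a c := fun h =>
  hgp a ha b hb c hc (fun e => hab.ne (congrArg Prod.fst e)) (fun e => hac.ne (congrArg Prod.fst e))
    hbc (collinear_of_ptSlope_eq hab hac h)

section Cups

variable {P : Finset (ℝ × ℝ)} {t : ℕ} {c : ℕ → ℝ × ℝ} {p r : ℝ × ℝ}

namespace IsGCup

theorem mono (h : IsGCup P t c) {s : ℕ} (hst : s ≤ t) : IsGCup P s c :=
  ⟨fun i hi => h.1 i (by omega), fun i hi => h.2.1 i (by omega), fun i hi => h.2.2 i (by omega)⟩

theorem fst_lt (h : IsGCup P t c) {i j : ℕ} (hij : i < j) (hj : j < t) : (c i).1 < (c j).1 := by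
  induction hij with
  | refl => exact h.2.1 i hj
  | step _ ih => exact (ih (by omega)).trans (h.2.1 _ hj)

theorem ptSlope_le (h : IsGCup P t c) {i j k : ℕ} (hij : i < j) (hjk : j < k) (hk : k < t) :
    ptSlope (c i) (c j) ≤ ptSlope (c j) (c k) := by
  obtain ⟨d, hd⟩ : ∃ d, k - i = d := ⟨_, rfl⟩
  induction d using Nat.strong_induction_on generalizing i j k with
  | _ d ih =>
  rcases (by omega : (j = i + 1 ∧ k = i + 2) ∨ j + 1 < k ∨ (k = j + 1 ∧ i + 1 < j)) with
    ⟨rfl, rfl⟩ | hjk' | ⟨rfl, hij'⟩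
  · exact h.2.2 i hk
  · obtain ⟨k, rfl⟩ : ∃ k', k = k' + 1 := ⟨k - 1, by omega⟩
    calc ptSlope (c i) (c j) ≤ ptSlope (c j) (c k) := ih _ (by omega) hij (by omega) (by omega) rfl
      _ ≤ ptSlope (c j) (c (k + 1)) :=
        (ptSlope_le_iff_left (h.fst_lt (by omega) (by omega)) (h.fst_lt (by omega) hk)).1
          (ih _ (by omega) (by omega) (by omega) hk rfl)
  · calc ptSlope (c i) (c j) ≤ ptSlope (c (i + 1)) (c j) :=
        (ptSlope_le_iff_right (h.fst_lt (by omega) (by omega)) (h.fst_lt hij' (by omega))).1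
          (ih _ (by omega) (by omega) hij' (by omega) rfl)
      _ ≤ ptSlope (c j) (c (j + 1)) := ih _ (by omega) hij' (by omega) hk rfl

theorem injOn (h : IsGCup P t c) : Set.InjOn c (Set.Iio t) :=
  Set.InjOn.of_comp (g := Prod.fst) (StrictMonoOn.injOn fun _ _ _ hj hij => h.fst_lt hij hj)

theorem ptSlope_lt (h : IsGCup P t c) (hgp : GeneralPosition P) {i j k : ℕ} (hij : i < j)
    (hjk : j < k) (hk : k < t) : ptSlope (c i) (c j) < ptSlope (c j) (c k) := by
  have hxij := h.fst_lt hij (by omega)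
  have hxjk := h.fst_lt hjk hk
  refine (ptSlope_lt_iff_left hxij hxjk).2 <|
    ((ptSlope_le_iff_left hxij hxjk).1 (h.ptSlope_le hij hjk hk)).lt_of_ne ?_
  exact hgp.ptSlope_ne (h.1 i (by omega)) (h.1 j (by omega)) (h.1 k hk) hxij (hxij.trans hxjk)
    fun e => hxjk.ne (congrArg Prod.fst e)

theorem exists_intercept_lt (h : IsGCup P t c) (hgp : GeneralPosition P) {i : ℕ} (hi : i < t) :
    ∃ s, ∀ l < t, l ≠ i → intercept s (c i) < intercept s (c l) := by
  obtain ⟨s, hleft, hright⟩ : ∃ s, (0 < i → ptSlope (c (i - 1)) (c i) < s) ∧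
      (i + 1 < t → s < ptSlope (c i) (c (i + 1))) := by
    by_cases hi0 : 0 < i <;> by_cases hit : i + 1 < t
    · obtain ⟨s, h₁, h₂⟩ := exists_between (h.ptSlope_lt hgp (by omega : i - 1 < i) (by omega) hit)
      exact ⟨s, fun _ => h₁, fun _ => h₂⟩
    · exact ⟨ptSlope (c (i - 1)) (c i) + 1, fun _ => by linarith, fun h => absurd h hit⟩
    · exact ⟨ptSlope (c i) (c (i + 1)) - 1, fun h => absurd h hi0, fun _ => by linarith⟩
    · exact ⟨0, fun h => absurd h hi0, fun h => absurd h hit⟩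
  refine ⟨s, fun l hl hli => ?_⟩
  rcases Nat.lt_or_gt_of_ne hli with hli | hil
  · refine (intercept_lt_intercept_iff' (h.fst_lt hli hi)).2 (lt_of_le_of_lt ?_ (hleft (by omega)))
    rcases (by omega : l = i - 1 ∨ l < i - 1) with rfl | hl'
    · exact le_rfl
    · exact (ptSlope_le_iff_right (h.fst_lt hl' (by omega)) (h.fst_lt (by omega) hi)).1
        (h.ptSlope_le hl' (by omega) hi)
  · refine (intercept_lt_intercept_iff (h.fst_lt hil hl)).2 (lt_of_lt_of_le (hright (by omega)) ?_)
    rcases (by omega : l = i + 1 ∨ i + 1 < l) with rfl | hl'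
    · exact le_rfl
    · exact (ptSlope_le_iff_left (h.fst_lt (by omega) (by omega)) (h.fst_lt hl' hl)).1
        (h.ptSlope_le (by omega) hl' hl)

theorem intercept_le_intercept_zero {j l : ℕ} (h : IsGCup P (j + 2) c) (hl : l < j + 2) :
    intercept (ptSlope (c 0) (c (j + 1))) (c l) ≤ intercept (ptSlope (c 0) (c (j + 1))) (c 0) := by
  rcases (by omega : l = 0 ∨ (0 < l ∧ l < j + 1) ∨ l = j + 1) with rfl | ⟨hl₀, hl₁⟩ | rfl
  · exact le_rfl
  · exact (intercept_le_intercept_iff' (h.fst_lt hl₀ hl)).2 <|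
      (ptSlope_le_iff_left (h.fst_lt hl₀ hl) (h.fst_lt hl₁ (by omega))).1
        (h.ptSlope_le hl₀ hl₁ (by omega))
  · exact (intercept_le_intercept_iff' (h.fst_lt (by omega) hl)).2 le_rfl

theorem snoc (h : IsGCup P (t + 2) c) (hp : p ∈ P) (hx : (c (t + 1)).1 < p.1)
    (hs : ptSlope (c t) (c (t + 1)) ≤ ptSlope (c (t + 1)) p) :
    IsGCup P (t + 3) (Function.update c (t + 2) p) := by
  refine ⟨fun i hi => ?_, fun i hi => ?_, fun i hi => ?_⟩
  · rcases (by omega : i < t + 2 ∨ i = t + 2) with hi | rfl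
    · rw [Function.update_of_ne (by omega)]; exact h.1 i hi
    · rw [Function.update_self]; exact hp
  · rcases (by omega : i + 1 < t + 2 ∨ i = t + 1) with hi | rfl
    · rw [Function.update_of_ne (by omega), Function.update_of_ne (by omega)]; exact h.2.1 i hi
    · rw [Function.update_of_ne (by omega), Function.update_self]; exact hx
  · rcases (by omega : i + 2 < t + 2 ∨ i = t) with hi | rfl
    · rw [Function.update_of_ne (by omega), Function.update_of_ne (by omega),
        Function.update_of_ne (by omega)]
      exact h.2.2 i hi
    · rw [Function.update_of_ne (by omega), Function.update_of_ne (by omega),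
        Function.update_self]
      exact hs

theorem snoc_snoc (h : IsGCup P (t + 2) c) (hp : p ∈ P) (hr : r ∈ P) (hxp : (c (t + 1)).1 < p.1)
    (hxr : p.1 < r.1) (hsp : ptSlope (c t) (c (t + 1)) ≤ ptSlope (c (t + 1)) p)
    (hsr : ptSlope (c (t + 1)) p ≤ ptSlope p r) :
    IsGCup P (t + 4) (Function.update (Function.update c (t + 2) p) (t + 3) r) :=
  (h.snoc hp hxp hsp).snoc hr (by simpa using hxr) (by simpa [Function.update_of_ne] using hsr)

end IsGCup

def seqCons {α : Type*} (p : α) (f : ℕ → α) : ℕ → α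
  | 0 => p
  | i + 1 => f i

namespace IsGCap

theorem tail (h : IsGCap P (t + 1) c) : IsGCap P t (fun i => c (i + 1)) :=
  ⟨fun i hi => h.1 _ (by omega), fun i hi => h.2.1 _ (by omega), fun i hi => h.2.2 _ (by omega)⟩

theorem cons (h : IsGCap P t c) (hp : p ∈ P) (hx : p.1 < (c 0).1)
    (hs : ptSlope (c 0) (c 1) ≤ ptSlope p (c 0)) : IsGCap P (t + 1) (seqCons p c) := by
  refine ⟨fun i hi => ?_, fun i hi => ?_, fun i hi => ?_⟩ <;> rcases i with _ | i
  · exact hp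
  · exact h.1 i (by omega)
  · exact hx
  · exact h.2.1 i (by omega)
  · exact hs
  · exact h.2.2 i (by omega)

end IsGCap

end Cups

section Configurations

variable {P : Finset (ℝ × ℝ)}

theorem ptSlope_lt_of_not_exists_isGCap {t : ℕ} {U : ℕ → ℝ × ℝ} {p : ℝ × ℝ}
    (hcap : ¬∃ c, IsGCap P (t + 1) c) (hU : IsGCap P t U) (hp : p ∈ P) (hx : p.1 < (U 0).1) :
    ptSlope p (U 0) < ptSlope (U 0) (U 1) :=
  not_le.1 fun hs => hcap ⟨_, hU.cons hp hx hs⟩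

theorem ptSlope_lt_of_not_exists_isGCup {t s : ℕ} {V W : ℕ → ℝ × ℝ}
    (hcup : ¬∃ c, IsGCup P (t + 4) c) (hV : IsGCup P (t + 2) V) (hW : IsGCup P (s + 3) W)
    (hVW : V (t + 1) = W 0) : ptSlope (W 0) (W (s + 1)) < ptSlope (V t) (V (t + 1)) := by
  rw [hVW]
  refine not_le.1 fun hs => hcup ⟨_, hV.snoc_snoc (hW.1 (s + 1) (by omega))
    (hW.1 (s + 2) (by omega)) ?_ (hW.2.1 (s + 1) (by omega)) ?_ ?_⟩ <;> rw [hVW]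
  · exact hW.fst_lt (by omega) (by omega)
  · exact hs
  · exact hW.ptSlope_le (by omega) (by omega) (by omega)

theorem isGCup_snoc_or_isGCap_cons {j l : ℕ} {C U : ℕ → ℝ × ℝ} (hC : IsGCup P (j + 2) C)
    (hU : IsGCap P (l + 3) U) (hCU : C 0 = U 0) (hx : (C (j + 1)).1 < (U 1).1)
    (habove : ptSlope (C 0) (C (j + 1)) < ptSlope (U 0) (U 1)) :
    IsGCup P (j + 3) (Function.update C (j + 2) (U 1)) ∨
      IsGCap P (l + 4) (seqCons (C j) (seqCons (C (j + 1)) fun i => U (i + 1))) := by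
  have hx₀ : (C 0).1 < (C (j + 1)).1 := hC.fst_lt (Nat.succ_pos j) (by omega)
  have hsteep : ptSlope (U 1) (U 2) < ptSlope (C (j + 1)) (U 1) :=
    calc ptSlope (U 1) (U 2) ≤ ptSlope (U 0) (U 1) := hU.2.2 0 (by omega)
      _ = ptSlope (C 0) (U 1) := by rw [hCU]
      _ < ptSlope (C (j + 1)) (U 1) :=
        (ptSlope_lt_iff_right hx₀ hx).1 ((ptSlope_lt_iff_left hx₀ hx).2 (hCU ▸ habove))
  rcases le_or_gt (ptSlope (C j) (C (j + 1))) (ptSlope (C (j + 1)) (U 1)) with hcup | hcap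
  · exact Or.inl (hC.snoc (hU.1 1 (by omega)) hx hcup)
  · exact Or.inr <| (hU.tail.cons (hC.1 _ (by omega)) hx hsteep.le).cons (hC.1 _ (by omega))
      (hC.2.1 j (by omega)) hcap.le

theorem exists_convexPosition_of_isGCup_of_ptSlope_lt (hgp : GeneralPosition P) {j : ℕ}
    {L : ℕ → ℝ × ℝ} {u : ℝ × ℝ} (hL : IsGCup P (j + 2) L) (hu : u ∈ P)
    (hxu₀ : (L 0).1 < u.1) (hxu₁ : u.1 < (L (j + 1)).1)
    (habove : ptSlope (L 0) (L (j + 1)) < ptSlope (L 0) u) :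
    ∃ S ⊆ P, S.card = j + 3 ∧ ConvexPosition S := by
  set c := ptSlope (L 0) (L (j + 1))
  have hbelow : ∀ l < j + 2, intercept c (L l) < intercept c u := fun l hl =>
    (hL.intercept_le_intercept_zero hl).trans_lt ((intercept_lt_intercept_iff hxu₀).2 habove)
  have hu_notMem : u ∉ (Finset.range (j + 2)).image L := by
    simp only [Finset.mem_image, Finset.mem_range, not_exists, not_and]
    exact fun l hl hlu => (hbelow l hl).ne (by rw [hlu])
  refine ⟨insert u ((Finset.range (j + 2)).image L), ?_, ?_, ?_⟩
  · simp only [Finset.insert_subset_iff, Finset.image_subset_iff, Finset.mem_range]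
    exact ⟨hu, hL.1⟩
  · rw [Finset.card_insert_of_notMem hu_notMem,
      Finset.card_image_of_injOn (by simpa only [Finset.coe_range] using hL.injOn),
      Finset.card_range]
  intro p hp
  simp only [Finset.mem_insert, Finset.mem_image, Finset.mem_range] at hp
  rcases hp with rfl | ⟨i, hi, rfl⟩
  · refine notMem_convexHull_diff_singleton_of_forall_lt (-intercept c) fun x hx hxp => ?_
    simp only [Finset.coe_insert, Finset.coe_image, Finset.coe_range, Set.mem_insert_iff,
      Set.mem_image, Set.mem_Iio] at hx
    rcases hx with rfl | ⟨l, hl, rfl⟩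
    · exact absurd rfl hxp
    · simpa only [LinearMap.neg_apply, neg_lt_neg_iff] using hbelow l hl
  · obtain ⟨s, hs⟩ := hL.exists_intercept_lt hgp hi
    have hs_le : ∀ l < j + 2, intercept s (L i) ≤ intercept s (L l) := fun l hl =>
      (eq_or_ne l i).elim (fun h => h ▸ le_rfl) fun h => (hs l hl h).le
    refine notMem_convexHull_diff_singleton_of_forall_lt (intercept s) fun x hx hxp => ?_
    simp only [Finset.coe_insert, Finset.coe_image, Finset.coe_range, Set.mem_insert_iff,
      Set.mem_image, Set.mem_Iio] at hx
    rcases hx with rfl | ⟨l, hl, rfl⟩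
    · exact lt_of_le_of_lt (le_min (hs_le 0 (by omega)) (hs_le (j + 1) (by omega)))
        (min_intercept_lt_of_ptSlope_lt hxu₀ hxu₁ habove)
    · exact hs l hl fun h => hxp (h ▸ rfl)

end Configurations

/-- Claim 1: if `P` contains no `n` points in convex position, no `n`-cup and no
`(n-1)`-cap, and `q ∈ P` is the last point of an `(n-2)`-cup `V`, the first
point of an `(n-2)`-cap `U = (q, u₂, …, u_{n-2})` and the first point of an
`(n-1)`-cup `W = (q, w₂, …, w_{n-1})`, then `u₂ = w_{n-1}`. -/
theorem mate_unique (n : ℕ) (hn : 6 ≤ n) (P : Finset (ℝ × ℝ))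
    (hgp : GeneralPosition P) (hx : DistinctX P)
    (hconv : ¬ ∃ S ⊆ P, S.card = n ∧ ConvexPosition S)
    (hcup : ¬ ∃ c, IsGCup P n c) (hcap : ¬ ∃ c, IsGCap P (n - 1) c)
    (q : ℝ × ℝ) (V U W : ℕ → ℝ × ℝ)
    (hV : IsGCup P (n - 2) V) (hVq : V (n - 3) = q)
    (hU : IsGCap P (n - 2) U) (hUq : U 0 = q)
    (hW : IsGCup P (n - 1) W) (hWq : W 0 = q) :
    U 1 = W (n - 2) := by
  obtain ⟨k, rfl⟩ : ∃ k, n = k + 6 := ⟨n - 6, by omega⟩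
  simp only [show k + 6 - 1 = k + 5 by omega, show k + 6 - 2 = k + 4 by omega,
    show k + 6 - 3 = k + 3 by omega] at hcap hV hVq hU hW ⊢
  subst hWq
  have hu : U 1 ∈ P := hU.1 1 (by omega)
  have hw : W (k + 4) ∈ P := hW.1 (k + 4) (by omega)
  have hxu : (W 0).1 < (U 1).1 := hUq ▸ hU.2.1 0 (by omega)
  have hat : ptSlope (V (k + 2)) (W 0) < ptSlope (W 0) (U 1) := by
    simpa only [hUq] using ptSlope_lt_of_not_exists_isGCap hcap hU (hV.1 (k + 2) (by omega))
      (hUq ▸ hVq ▸ hV.2.1 (k + 2) (by omega))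
  have hchord : ptSlope (W 0) (W (k + 3)) < ptSlope (W 0) (U 1) :=
    lt_trans (hVq ▸ ptSlope_lt_of_not_exists_isGCup hcup hV hW hVq) hat
  by_contra hne
  rcases lt_trichotomy (ptSlope (W 0) (U 1)) (ptSlope (W 0) (W (k + 4))) with hbelow | hon | habove
  · rcases (hx _ hu _ hw hne).lt_or_gt with hleft | hright
    · exact hcup ⟨_, hV.snoc_snoc hu hw (hVq ▸ hxu) hleft (hVq ▸ hat.le)
        (hVq ▸ ((ptSlope_lt_iff_left hxu hleft).2 hbelow).le)⟩
    · rcases isGCup_snoc_or_isGCap_cons (hW.mono (by omega : k + 4 ≤ k + 5)) hU hUq.symm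
        ((hW.fst_lt (by omega) (by omega)).trans hright) (hUq ▸ hchord) with hlow | hcap'
      · exact hconv (exists_convexPosition_of_isGCup_of_ptSlope_lt hgp hlow hw
          (by simpa using hW.fst_lt (by omega) (by omega)) (by simpa using hright)
          (by simpa using hbelow))
      · exact hcap ⟨_, hcap'⟩
  · exact hgp.ptSlope_ne (hW.1 0 (by omega)) hu hw hxu (hW.fst_lt (by omega) (by omega)) hne hon
  · rcases (hx _ hu _ hw hne).lt_or_gt with hleft | hright
    · exact hconv (exists_convexPosition_of_isGCup_of_ptSlope_lt hgp hW hu hxu hleft habove)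
    · rcases isGCup_snoc_or_isGCap_cons hW hU hUq.symm hright (hUq ▸ habove) with hcup' | hcap'
      exacts [hcup ⟨_, hcup'⟩, hcap ⟨_, hcap'⟩]
end

section
/- Let n ≥ 5, let m be a positive integer, and let f assign a real number f(i,j) to each pair 1 ≤ i < j ≤ m. Suppose f is (n, n−1)-free, and suppose additionally that no index is simultaneously the last element of an (n−2)-cup and the first element of both an (n−2)-cap and an (n−1)-cup. Then for every index i that is simultaneously the first element of an (n−2)-cap and the first element of an (n−1)-cup with respect to f, the index i is not the last element of any (n−2)-cap and not the last element of any (n−2)-cup. -/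
/-!
If `i` ends an `(n-2)`-cap `e` and starts an `(n-1)`-cup `u`, compare the slopes
`f (e (n-4)) i` and `f i (u 1)` at `i`: if the first is at most the second, `e (n-4)`
can be put in front of `u`, giving an `n`-cup; otherwise `u 1` can be appended to `e`,
giving an `(n-1)`-cap. Either contradicts freeness. That `i` ends no `(n-2)`-cup is
the extra hypothesis read at `i`.
-/

section Extend

variable {m t a b : ℕ} {f : ℕ → ℕ → ℝ} {u e : ℕ → ℕ}

lemma IsCup.cons (hu : IsCup m f (t + 2) u) (ha : 1 ≤ a ∧ a ≤ m) (hlt : a < u 0)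
    (hle : f a (u 0) ≤ f (u 0) (u 1)) :
    IsCup m f (t + 3) (fun | 0 => a | j + 1 => u j) := by
  obtain ⟨hrange, hmono, hslope⟩ := hu
  refine ⟨fun j hj => ?_, fun j hj => ?_, fun j hj => ?_⟩
  · cases j with
    | zero => exact ha
    | succ j => exact hrange j (by omega)
  · cases j with
    | zero => exact hlt
    | succ j => exact hmono j (by omega)
  · cases j with
    | zero => exact hle
    | succ j => exact hslope j (by omega)

lemma IsCap.snoc (he : IsCap m f (t + 2) e) (hb : 1 ≤ b ∧ b ≤ m) (hlt : e (t + 1) < b)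
    (hle : f (e (t + 1)) b ≤ f (e t) (e (t + 1))) :
    IsCap m f (t + 3) (Function.update e (t + 2) b) := by
  obtain ⟨hrange, hmono, hslope⟩ := he
  refine ⟨fun j hj => ?_, fun j hj => ?_, fun j hj => ?_⟩
  · rcases eq_or_ne j (t + 2) with rfl | hj'
    · simpa using hb
    · rw [Function.update_of_ne hj']
      exact hrange j (by omega)
  · rcases eq_or_ne j (t + 1) with rfl | hj'
    · simpa using hlt
    · rw [Function.update_of_ne (by omega), Function.update_of_ne (by omega)]
      exact hmono j (by omega)
  · rcases eq_or_ne j t with rfl | hj'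
    · simpa using hle
    · rw [Function.update_of_ne (by omega), Function.update_of_ne (by omega),
        Function.update_of_ne (by omega)]
      exact hslope j (by omega)

end Extend

theorem claim_last_general (n m : ℕ) (hn : 5 ≤ n)
    (f : ℕ → ℕ → ℝ) (hf : IsFree m f n (n - 1))
    (hno : ∀ q : ℕ, ¬ ((∃ c, IsCup m f (n - 2) c ∧ c (n - 3) = q) ∧
        (∃ c, IsCap m f (n - 2) c ∧ c 0 = q) ∧
        (∃ c, IsCup m f (n - 1) c ∧ c 0 = q))) :
    ∀ i : ℕ,
      (∃ c, IsCap m f (n - 2) c ∧ c 0 = i) →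
      (∃ c, IsCup m f (n - 1) c ∧ c 0 = i) →
      (¬ ∃ c, IsCap m f (n - 2) c ∧ c (n - 3) = i) ∧
      (¬ ∃ c, IsCup m f (n - 2) c ∧ c (n - 3) = i) := by
  obtain ⟨k, rfl⟩ : ∃ k, n = k + 4 := ⟨n - 4, by omega⟩
  simp only [show k + 4 - 1 = k + 3 by omega, show k + 4 - 2 = k + 2 by omega,
    show k + 4 - 3 = k + 1 by omega] at hf hno ⊢
  rintro i hcap ⟨u, hu, rfl⟩
  refine ⟨?_, fun hcup => hno _ ⟨hcup, hcap, u, hu, rfl⟩⟩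
  rintro ⟨e, he, hei⟩
  rcases le_or_gt (f (e k) (u 0)) (f (u 0) (u 1)) with hle | hgt
  · exact hf.1 ⟨_, (hu : IsCup m f (k + 1 + 2) u).cons (he.1 k (by omega))
      (hei ▸ he.2.1 k (by omega)) (hei ▸ hle)⟩
  · exact hf.2 ⟨_, he.snoc (hu.1 1 (by omega)) (hei ▸ hu.2.1 0 (by omega)) (hei ▸ hgt.le)⟩

/-- Claim 4 in the language of index functions: if `f` is `(n, n-1)`-free and no
index is simultaneously the end of an `(n-2)`-cup and the beginning of both an
`(n-2)`-cap and an `(n-1)`-cup, then every index that begins both an `(n-2)`-cap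
and an `(n-1)`-cup is not the end of any `(n-2)`-cap nor of any `(n-2)`-cup. -/
theorem claim_last (n m : ℕ) (hn : 5 ≤ n) (hm : 1 ≤ m)
    (f : ℕ → ℕ → ℝ) (hf : IsFree m f n (n - 1))
    (hno : ∀ q : ℕ, ¬ ((∃ c, IsCup m f (n - 2) c ∧ c (n - 3) = q) ∧
        (∃ c, IsCap m f (n - 2) c ∧ c 0 = q) ∧
        (∃ c, IsCup m f (n - 1) c ∧ c 0 = q))) :
    ∀ i : ℕ,
      (∃ c, IsCap m f (n - 2) c ∧ c 0 = i) →
      (∃ c, IsCup m f (n - 1) c ∧ c 0 = i) →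
      (¬ ∃ c, IsCap m f (n - 2) c ∧ c (n - 3) = i) ∧
      (¬ ∃ c, IsCup m f (n - 2) c ∧ c (n - 3) = i) :=
  claim_last_general n m hn f hf hno
end

section
/- Let n ≥ 5, let m be a positive integer, and let f assign a real number f(i,j) to each pair 1 ≤ i < j ≤ m. Suppose f is (n, n−1)-free (no n-cup and no (n−1)-cap), and suppose additionally that no index is simultaneously the last element of an (n−2)-cup and the first element of both an (n−2)-cap and an (n−1)-cup. Then m ≤ C(2n−5, n−2) − C(2n−7, n−3) + C(2n−8, n−4), where C(a,b) denotes the binomial coefficient. -/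
open Finset Function

/-- Cups are the chains for `r = (· ≤ ·)`, caps those for `r = (· ≥ ·)`. -/
structure IsChainIn {α : Type*} (r : α → α → Prop) (f : ℕ → ℕ → α) (S : Finset ℕ) (t : ℕ)
    (q : ℕ → ℕ) : Prop where
  mem : ∀ i, i < t → q i ∈ S
  lt : ∀ i, i + 1 < t → q i < q (i + 1)
  rel : ∀ i, i + 2 < t → r (f (q i) (q (i + 1))) (f (q (i + 1)) (q (i + 2)))

def EndsChainIn {α : Type*} (r : α → α → Prop) (f : ℕ → ℕ → α) (S : Finset ℕ) (t p : ℕ) :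
    Prop :=
  ∃ c, IsChainIn r f S t c ∧ c (t - 1) = p

def StartsChainIn {α : Type*} (r : α → α → Prop) (f : ℕ → ℕ → α) (S : Finset ℕ) (t p : ℕ) :
    Prop :=
  ∃ c, IsChainIn r f S t c ∧ c 0 = p

theorem isCup_iff_isChainIn {m t : ℕ} {f : ℕ → ℕ → ℝ} {q : ℕ → ℕ} :
    IsCup m f t q ↔ IsChainIn (· ≤ ·) f (Icc 1 m) t q :=
  ⟨fun h => ⟨fun i hi => mem_Icc.2 (h.1 i hi), h.2.1, h.2.2⟩,
   fun h => ⟨fun i hi => mem_Icc.1 (h.mem i hi), h.lt, h.rel⟩⟩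

theorem isCap_iff_isChainIn {m t : ℕ} {f : ℕ → ℕ → ℝ} {q : ℕ → ℕ} :
    IsCap m f t q ↔ IsChainIn (· ≥ ·) f (Icc 1 m) t q :=
  ⟨fun h => ⟨fun i hi => mem_Icc.2 (h.1 i hi), h.2.1, h.2.2⟩,
   fun h => ⟨fun i hi => mem_Icc.1 (h.mem i hi), h.lt, h.rel⟩⟩

namespace IsChainIn

variable {α : Type*} {r : α → α → Prop} {f : ℕ → ℕ → α} {S T : Finset ℕ} {t z : ℕ} {c : ℕ → ℕ}

theorem mono (hc : IsChainIn r f S t c) (hST : S ⊆ T) : IsChainIn r f T t c :=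
  ⟨fun i hi => hST (hc.mem i hi), hc.lt, hc.rel⟩

theorem snoc (hc : IsChainIn r f S (t + 2) c) (hz : z ∈ S) (hlt : c (t + 1) < z)
    (hr : r (f (c t) (c (t + 1))) (f (c (t + 1)) z)) :
    IsChainIn r f S (t + 3) (update c (t + 2) z) where
  mem i hi := by
    rcases eq_or_ne i (t + 2) with rfl | hne
    · simpa using hz
    · rw [update_of_ne hne]
      exact hc.mem i (by omega)
  lt i hi := by
    rcases eq_or_ne i (t + 1) with rfl | hne
    · simpa [update_of_ne (show t + 1 ≠ t + 2 by omega)] using hlt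
    · rw [update_of_ne (show i ≠ t + 2 by omega), update_of_ne (show i + 1 ≠ t + 2 by omega)]
      exact hc.lt i (by omega)
  rel i hi := by
    rcases eq_or_ne i t with rfl | hne
    · simpa [update_of_ne (show i ≠ i + 2 by omega), update_of_ne (show i + 1 ≠ i + 2 by omega)]
        using hr
    · rw [update_of_ne (show i ≠ t + 2 by omega), update_of_ne (show i + 1 ≠ t + 2 by omega),
        update_of_ne (show i + 2 ≠ t + 2 by omega)]
      exact hc.rel i (by omega)

theorem cons (hc : IsChainIn r f S (t + 2) c) (hz : z ∈ S) (hlt : z < c 0)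
    (hr : r (f z (c 0)) (f (c 0) (c 1))) :
    IsChainIn r f S (t + 3) (fun | 0 => z | i + 1 => c i) where
  mem
    | 0, _ => hz
    | i + 1, hi => hc.mem i (by omega)
  lt
    | 0, _ => hlt
    | i + 1, hi => hc.lt i (by omega)
  rel
    | 0, _ => hr
    | i + 1, hi => hc.rel i (by omega)

end IsChainIn

section

variable {α : Type*} {r : α → α → Prop} {f : ℕ → ℕ → α} {S T : Finset ℕ} {t : ℕ}

theorem card_le_one_of_not_isChainIn_two (h : ¬ ∃ q, IsChainIn r f S 2 q) : #S ≤ 1 := by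
  refine card_le_one.2 fun x hx y hy => ?_
  by_contra hne
  wlog hlt : x < y generalizing x y
  · exact this y hy x hx (Ne.symm hne) (by omega)
  refine h ⟨fun i => if i = 0 then x else y, ⟨fun i _ => ?_, fun i hi => ?_, fun i hi => ?_⟩⟩
  · split_ifs <;> assumption
  · obtain rfl : i = 0 := by omega
    simpa using hlt
  · omega

theorem not_isChainIn_of_forall_not_endsChainIn (ht : 1 ≤ t) (hTS : T ⊆ S)
    (hT : ∀ p ∈ T, ¬ EndsChainIn r f S t p) : ¬ ∃ q, IsChainIn r f T t q :=
  fun ⟨q, hq⟩ => hT _ (hq.mem (t - 1) (by omega)) ⟨q, hq.mono hTS, rfl⟩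

theorem not_isChainIn_of_forall_not_startsChainIn (ht : 1 ≤ t) (hTS : T ⊆ S)
    (hT : ∀ p ∈ T, ¬ StartsChainIn r f S t p) : ¬ ∃ q, IsChainIn r f T t q :=
  fun ⟨q, hq⟩ => hT _ (hq.mem 0 (by omega)) ⟨q, hq.mono hTS, rfl⟩

end

section

variable {α : Type*} [LinearOrder α] {f : ℕ → ℕ → α} {S T : Finset ℕ}

/-- Whichever of the two slopes at the common point is larger, one of the chains extends
across it. -/
theorem exists_cup_or_cap_of_glue {s t : ℕ} {c d : ℕ → ℕ}
    (hc : IsChainIn (· ≤ ·) f S (s + 2) c) (hd : IsChainIn (· ≥ ·) f S (t + 2) d)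
    (h : c (s + 1) = d 0) :
    (∃ c', IsChainIn (· ≤ ·) f S (s + 3) c' ∧ c' 0 = c 0 ∧ c' (s + 2) = d 1) ∨
      ∃ d', IsChainIn (· ≥ ·) f S (t + 3) d' := by
  rcases le_total (f (c s) (c (s + 1))) (f (d 0) (d 1)) with hle | hle
  · refine .inl ⟨_, hc.snoc (hd.mem 1 (by omega)) ?_ ?_, by simp, by simp⟩
    · exact h ▸ hd.lt 0 (by omega)
    · exact h ▸ hle
  · exact .inr ⟨_, hd.cons (hc.mem s (by omega)) (h ▸ hc.lt s (by omega)) (h ▸ hle)⟩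

theorem card_le_choose_of_not_cup_of_not_cap (a b : ℕ)
    (hcup : ¬ ∃ q, IsChainIn (· ≤ ·) f S (a + 2) q)
    (hcap : ¬ ∃ q, IsChainIn (· ≥ ·) f S (b + 2) q) : #S ≤ (a + b).choose a := by
  induction a generalizing b S with
  | zero => simpa using card_le_one_of_not_isChainIn_two hcup
  | succ a iha =>
    induction b generalizing S with
    | zero => simpa using card_le_one_of_not_isChainIn_two hcap
    | succ b ihb =>
      classical
      set E := S.filter (EndsChainIn (· ≤ ·) f S (a + 2))
      have hES : E ⊆ S := filter_subset _ _
      have hE : #E ≤ (a + 1 + b).choose (a + 1) := by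
        refine ihb (fun ⟨q, hq⟩ => hcup ⟨q, hq.mono hES⟩) fun ⟨d, hd⟩ => ?_
        obtain ⟨c, hc, hcd⟩ := (mem_filter.1 (hd.mem 0 (by omega))).2
        rcases exists_cup_or_cap_of_glue hc (hd.mono hES) hcd with ⟨c', hc', -⟩ | hcap'
        · exact hcup ⟨c', hc'⟩
        · exact hcap hcap'
      have hSE : #(S \ E) ≤ (a + (b + 1)).choose a := by
        refine iha (b + 1) ?_ fun ⟨q, hq⟩ => hcap ⟨q, hq.mono sdiff_subset⟩
        exact not_isChainIn_of_forall_not_endsChainIn (by omega) sdiff_subset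
          fun p hp hpE => (mem_sdiff.1 hp).2 (mem_filter.2 ⟨(mem_sdiff.1 hp).1, hpE⟩)
      calc #S = #(S \ E) + #E := (card_sdiff_add_card_eq_card hES).symm
        _ ≤ (a + (b + 1)).choose a + (a + 1 + b).choose (a + 1) := add_le_add hSE hE
        _ = (a + 1 + (b + 1)).choose (a + 1) := by
          rw [show a + 1 + (b + 1) = a + (b + 1) + 1 by omega, Nat.choose_succ_succ',
            show a + 1 + b = a + (b + 1) by omega]

theorem not_cup_of_forall_startsChainIn {s : ℕ}
    (hcap : ¬ ∃ q, IsChainIn (· ≥ ·) f S (s + 3) q) (hTS : T ⊆ S)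
    (hT : ∀ p ∈ T, StartsChainIn (· ≥ ·) f S (s + 2) p ∧ ¬ StartsChainIn (· ≤ ·) f S (s + 3) p) :
    ¬ ∃ q, IsChainIn (· ≤ ·) f T (s + 2) q := by
  rintro ⟨c, hc⟩
  obtain ⟨d, hd, hdc⟩ := (hT _ (hc.mem (s + 1) (by omega))).1
  rcases exists_cup_or_cap_of_glue (hc.mono hTS) hd hdc.symm with ⟨c', hc', hc'0, -⟩ | hcap'
  · exact (hT _ (hc.mem 0 (by omega))).2 ⟨c', hc', hc'0⟩
  · exact hcap hcap'

/-- Gluing twice: a cap in `T` starting at `d 0` is glued to a cup ending there, and the longer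
cup, which now ends at `d 1 ∈ T`, is glued to a cap starting at `d 1`. -/
theorem not_cap_of_forall_endsChainIn_startsChainIn {s : ℕ}
    (hcup : ¬ ∃ q, IsChainIn (· ≤ ·) f S (s + 4) q)
    (hcap : ¬ ∃ q, IsChainIn (· ≥ ·) f S (s + 3) q) (hTS : T ⊆ S)
    (hT : ∀ p ∈ T, EndsChainIn (· ≤ ·) f S (s + 2) p ∧ StartsChainIn (· ≥ ·) f S (s + 2) p) :
    ¬ ∃ q, IsChainIn (· ≥ ·) f T (s + 2) q := by
  rintro ⟨d, hd⟩
  obtain ⟨c, hc, hcd⟩ := (hT _ (hd.mem 0 (by omega))).1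
  rcases exists_cup_or_cap_of_glue hc (hd.mono hTS) hcd with ⟨c', hc', -, hc'd⟩ | hcap'
  · obtain ⟨d', hd', hd'd⟩ := (hT _ (hd.mem 1 (by omega))).2
    rcases exists_cup_or_cap_of_glue (s := s + 1) hc' hd' (hc'd.trans hd'd.symm) with
      ⟨c'', hc'', -⟩ | hcap''
    · exact hcup ⟨c'', hc''⟩
    · exact hcap hcap''
  · exact hcap hcap'

theorem card_le_of_not_cup_of_not_cap (s : ℕ)
    (hcup : ¬ ∃ q, IsChainIn (· ≤ ·) f S (s + 4) q)
    (hcap : ¬ ∃ q, IsChainIn (· ≥ ·) f S (s + 3) q)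
    (hno : ∀ p ∈ S, EndsChainIn (· ≤ ·) f S (s + 2) p → StartsChainIn (· ≥ ·) f S (s + 2) p →
      ¬ StartsChainIn (· ≤ ·) f S (s + 3) p) :
    #S ≤ (2 * s + 1).choose s + (2 * s + 2).choose (s + 2) + (2 * s).choose s := by
  classical
  set E := S.filter (EndsChainIn (· ≤ ·) f S (s + 2))
  set T := E.filter (StartsChainIn (· ≥ ·) f S (s + 2))
  have hES : E ⊆ S := filter_subset _ _
  have hTE : T ⊆ E := filter_subset _ _
  have hmemT : ∀ p ∈ T, (p ∈ S ∧ EndsChainIn (· ≤ ·) f S (s + 2) p) ∧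
      StartsChainIn (· ≥ ·) f S (s + 2) p := fun p hp => by
    simpa only [T, E, mem_filter] using hp
  have hSE : #(S \ E) ≤ (s + (s + 1)).choose s := by
    refine card_le_choose_of_not_cup_of_not_cap s (s + 1) ?_
      fun ⟨q, hq⟩ => hcap ⟨q, hq.mono sdiff_subset⟩
    exact not_isChainIn_of_forall_not_endsChainIn (by omega) sdiff_subset
      fun p hp hpE => (mem_sdiff.1 hp).2 (mem_filter.2 ⟨(mem_sdiff.1 hp).1, hpE⟩)
  have hET : #(E \ T) ≤ (s + 2 + s).choose (s + 2) := by
    refine card_le_choose_of_not_cup_of_not_cap (s + 2) s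
      (fun ⟨q, hq⟩ => hcup ⟨q, hq.mono (sdiff_subset.trans hES)⟩) ?_
    exact not_isChainIn_of_forall_not_startsChainIn (by omega) (sdiff_subset.trans hES)
      fun p hp hpT => (mem_sdiff.1 hp).2 (mem_filter.2 ⟨(mem_sdiff.1 hp).1, hpT⟩)
  have hT : #T ≤ (s + s).choose s := by
    refine card_le_choose_of_not_cup_of_not_cap (f := f) s s ?_ ?_
    · exact not_cup_of_forall_startsChainIn hcap (hTE.trans hES) fun p hp =>
        ⟨(hmemT p hp).2, hno p (hmemT p hp).1.1 (hmemT p hp).1.2 (hmemT p hp).2⟩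
    · exact not_cap_of_forall_endsChainIn_startsChainIn hcup hcap (hTE.trans hES) fun p hp =>
        ⟨(hmemT p hp).1.2, (hmemT p hp).2⟩
  rw [show s + (s + 1) = 2 * s + 1 by omega] at hSE
  rw [show s + 2 + s = 2 * s + 2 by omega] at hET
  rw [← two_mul] at hT
  have := card_sdiff_add_card_eq_card hES
  have := card_sdiff_add_card_eq_card hTE
  omega

end

theorem counting_bound_general (n m : ℕ) (hn : 5 ≤ n)
    (f : ℕ → ℕ → ℝ) (hf : IsFree m f n (n - 1))
    (hno : ∀ q : ℕ, ¬ ((∃ c, IsCup m f (n - 2) c ∧ c (n - 3) = q) ∧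
        (∃ c, IsCap m f (n - 2) c ∧ c 0 = q) ∧
        (∃ c, IsCup m f (n - 1) c ∧ c 0 = q))) :
    (m : ℤ) ≤ ((2 * n - 5).choose (n - 2) : ℤ) -
      ((2 * n - 7).choose (n - 3) : ℤ) + ((2 * n - 8).choose (n - 4) : ℤ) := by
  obtain ⟨s, rfl⟩ : ∃ s, n = s + 4 := ⟨n - 4, by omega⟩
  have hm := card_le_of_not_cup_of_not_cap (f := f) (S := Icc 1 m) s
    (fun ⟨q, hq⟩ => hf.1 ⟨q, isCup_iff_isChainIn.2 hq⟩)
    (fun ⟨q, hq⟩ => hf.2 ⟨q, isCap_iff_isChainIn.2 hq⟩)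
    fun p _ ⟨c₁, h₁, e₁⟩ ⟨c₂, h₂, e₂⟩ ⟨c₃, h₃, e₃⟩ => hno p ⟨⟨c₁, isCup_iff_isChainIn.2 h₁, e₁⟩,
      ⟨c₂, isCap_iff_isChainIn.2 h₂, e₂⟩, ⟨c₃, isCup_iff_isChainIn.2 h₃, e₃⟩⟩
  rw [Nat.card_Icc, Nat.add_sub_cancel] at hm
  simp only [show 2 * (s + 4) - 5 = 2 * s + 2 + 1 by omega, show s + 4 - 2 = s + 1 + 1 by omega,
    show 2 * (s + 4) - 7 = 2 * s + 1 by omega, show s + 4 - 3 = s + 1 by omega,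
    show 2 * (s + 4) - 8 = 2 * s by omega, show s + 4 - 4 = s by omega, Nat.choose_succ_succ',
    show 2 * s + 2 = 2 * s + 1 + 1 by omega] at hm ⊢
  push_cast at hm ⊢
  omega

/-- Counting bound: if `f` is `(n, n-1)`-free and no index is simultaneously the
end of an `(n-2)`-cup and the beginning of both an `(n-2)`-cap and an
`(n-1)`-cup, then `m ≤ C(2n-5, n-2) - C(2n-7, n-3) + C(2n-8, n-4)`. -/
theorem counting_bound (n m : ℕ) (hn : 5 ≤ n) (hm : 1 ≤ m)
    (f : ℕ → ℕ → ℝ) (hf : IsFree m f n (n - 1))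
    (hno : ∀ q : ℕ, ¬ ((∃ c, IsCup m f (n - 2) c ∧ c (n - 3) = q) ∧
        (∃ c, IsCap m f (n - 2) c ∧ c 0 = q) ∧
        (∃ c, IsCup m f (n - 1) c ∧ c 0 = q))) :
    (m : ℤ) ≤ ((2 * n - 5).choose (n - 2) : ℤ) -
      ((2 * n - 7).choose (n - 3) : ℤ) + ((2 * n - 8).choose (n - 4) : ℤ) :=
  counting_bound_general n m hn f hf hno
end
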